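/- Let k ≥ 2 be an integer and let F : ℤ → ℤ be multiplication by k. A subset S ⊆ ℤ is F-automatic (i.e., there exist an integer r > 0 and an F^r-spanning set Σ for ℤ such that {w ∈ Σ* : [w]_{F^r} ∈ S} is a regular language) if and only if S is k-automatic in the classical sense, i.e., the collection of sets {x ∈ ℤ : c + k^m x ∈ S}, as m ranges over ℕ and c over {0, 1, …, k^m − 1}, contains only finitely many distinct subsets of ℤ. -/

import Mathlib

/-!
By Myhill–Nerode, `S` is `(Σ, G)`-automatic exactly when its residuals
`{x | [w]_G + G^|w| x ∈ S}`, `w ∈ Σ*`, are finitely many; for `G` multiplication by `K = k^r`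
these are the kernel sets `{x | [w] + K^|w| x ∈ S}`.

If the classical `k`-kernel is finite, take `r = 3` and `Σ = [-k³, k³]`: as the digits are
bounded, `|[w]| ≤ 2 K^|w|`, so every residual is a translate by at most `3` of a classical
kernel set.

Conversely, read a classical kernel set `{x | c + k^m x ∈ S}` one base-`k` digit of `c` at a time,
from the most significant one. The state is a residual `T` together with a carry:
`{x | y + k^s x ∈ T}` with `s < r`. When `s` reaches `r`, the carry `y` is split as `t + K y'`
with `t ∈ Σ`, and `t` is absorbed into the residual. Since `Σ` is bounded, the carry stays
bounded, so only finitely many kernel sets arise.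
-/

open Pointwise

/-- `[w]_F`: the base-`F` evaluation of a word `w = x₀x₁⋯x_m`,
namely `x₀ + F x₁ + ⋯ + F^m x_m`, with `[∅]_F = 0`. -/
def wordVal {Γ : Type*} [AddCommGroup Γ] (F : AddMonoid.End Γ) : List Γ → Γ
  | [] => 0
  | x :: xs => x + F (wordVal F xs)

/-- `Sig` is an `F`-spanning set for `Γ`. -/
def IsSpanningSet {Γ : Type*} [AddCommGroup Γ] (F : AddMonoid.End Γ) (Sig : Set Γ) : Prop :=
  Sig.Finite ∧
  (0 : Γ) ∈ Sig ∧ (∀ x ∈ Sig, -x ∈ Sig) ∧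
  (∀ x : Γ, F x ∈ Sig → x ∈ Sig) ∧
  (∀ x : Γ, ∃ w : List Γ, (∀ y ∈ w, y ∈ Sig) ∧ wordVal F w = x) ∧
  (∀ x₁ ∈ Sig, ∀ x₂ ∈ Sig, ∀ x₃ ∈ Sig, ∀ x₄ ∈ Sig, ∀ x₅ ∈ Sig,
    ∃ t ∈ Sig, ∃ t' ∈ Sig, x₁ + x₂ + x₃ + x₄ + x₅ = t + F t') ∧
  (∀ x₁ ∈ Sig, ∀ x₂ ∈ Sig, ∀ x₃ ∈ Sig,
    (∃ y : Γ, x₁ + x₂ + x₃ = F y) → ∃ t ∈ Sig, x₁ + x₂ + x₃ = F t)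

/-- `S` is `(Σ,F)`-automatic: the language of words over `Σ` whose base-`F` value lies
in `S` is a regular language. -/
def IsSFAutomatic {Γ : Type*} [AddCommGroup Γ] (F : AddMonoid.End Γ) (Sig : Set Γ)
    (S : Set Γ) : Prop :=
  Language.IsRegular {w : List ↥Sig | wordVal F (w.map Subtype.val) ∈ S}

section WordVal

variable {Γ : Type*} [AddCommGroup Γ] (F : AddMonoid.End Γ)

@[simp]
lemma wordVal_nil : wordVal F [] = 0 := rfl

@[simp]
lemma wordVal_cons (x : Γ) (xs : List Γ) : wordVal F (x :: xs) = x + F (wordVal F xs) := rfl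

lemma wordVal_append (w u : List Γ) :
    wordVal F (w ++ u) = wordVal F w + (F ^ w.length) (wordVal F u) := by
  induction w with
  | nil => simp
  | cons x xs ih => simp [ih, pow_succ', add_assoc]

lemma wordVal_map_neg (w : List Γ) : wordVal F (w.map Neg.neg) = -wordVal F w := by
  induction w with
  | nil => simp
  | cons x xs ih => simp [ih, add_comm]

def wordResidual (S : Set Γ) (w : List Γ) : Set Γ :=
  {x | wordVal F w + (F ^ w.length) x ∈ S}

@[simp]
lemma wordResidual_nil (S : Set Γ) : wordResidual F S [] = S := by
  ext; simp [wordResidual]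

lemma wordResidual_append (S : Set Γ) (w u : List Γ) :
    wordResidual F S (w ++ u) = wordResidual F (wordResidual F S w) u := by
  ext x
  simp [wordResidual, wordVal_append, pow_add, add_assoc]

def wordLanguage (Sig : Set Γ) (T : Set Γ) : Language Sig :=
  {w | wordVal F (w.map Subtype.val) ∈ T}

lemma leftQuotient_wordLanguage (Sig T : Set Γ) (w : List Sig) :
    (wordLanguage F Sig T).leftQuotient w =
      wordLanguage F Sig (wordResidual F T (w.map Subtype.val)) := by
  ext u
  change wordVal F ((w ++ u).map Subtype.val) ∈ T ↔ _
  rw [List.map_append, wordVal_append]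
  rfl

end WordVal

namespace IsSpanningSet

variable {Γ : Type*} [AddCommGroup Γ] {F : AddMonoid.End Γ} {Sig : Set Γ}

lemma exists_wordVal_eq (h : IsSpanningSet F Sig) (x : Γ) :
    ∃ u : List Sig, wordVal F (u.map Subtype.val) = x := by
  obtain ⟨-, -, -, -, hrepr, -⟩ := h
  obtain ⟨w, hw, rfl⟩ := hrepr x
  lift w to List Sig using hw
  exact ⟨w, rfl⟩

lemma zero_mem (h : IsSpanningSet F Sig) : (0 : Γ) ∈ Sig := h.2.1

lemma exists_eq_add_apply (h : IsSpanningSet F Sig) (x : Γ) : ∃ t ∈ Sig, ∃ y, x = t + F y := by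
  obtain ⟨u, rfl⟩ := h.exists_wordVal_eq x
  cases u with
  | nil => exact ⟨0, h.zero_mem, 0, by simp⟩
  | cons t u => exact ⟨t, t.2, wordVal F (u.map Subtype.val), rfl⟩

end IsSpanningSet

/-- By Myhill–Nerode, since the left quotients of the language of `S` are the languages of its
residuals, and `wordLanguage` is injective once every element is the value of a word. -/
lemma isSFAutomatic_iff_finite_range_wordResidual {Γ : Type*} [AddCommGroup Γ]
    {F : AddMonoid.End Γ} {Sig : Set Γ}
    (hspan : ∀ x : Γ, ∃ u : List Sig, wordVal F (u.map Subtype.val) = x) (S : Set Γ) :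
    IsSFAutomatic F Sig S ↔
      (Set.range fun w : List Sig => wordResidual F S (w.map Subtype.val)).Finite := by
  have hinj : Function.Injective (wordLanguage F Sig) := by
    intro T T' hTT'
    ext x
    obtain ⟨u, rfl⟩ := hspan x
    exact Set.ext_iff.1 hTT' u
  have hrange : Set.range (wordLanguage F Sig S).leftQuotient =
      wordLanguage F Sig '' Set.range fun w : List Sig =>
        wordResidual F S (w.map Subtype.val) := by
    rw [← Set.range_comp]
    exact congrArg Set.range (funext (leftQuotient_wordLanguage F Sig S))
  change (wordLanguage F Sig S).IsRegular ↔ _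
  rw [Language.isRegular_iff_finite_range_leftQuotient, hrange, Set.finite_image_iff hinj.injOn]

section Integers

def kernelSet (S : Set ℤ) (n c : ℤ) : Set ℤ := {x | c + n * x ∈ S}

lemma kernelSet_kernelSet (S : Set ℤ) (n c n' c' : ℤ) :
    kernelSet (kernelSet S n c) n' c' = kernelSet S (n * n') (c + n * c') := by
  ext x
  simp only [kernelSet, Set.mem_ofPred_eq]
  ring_nf

def kKernel (k : ℤ) (S : Set ℤ) : Set (Set ℤ) :=
  {T | ∃ (m : ℕ) (c : ℤ), 0 ≤ c ∧ c < k ^ m ∧ T = kernelSet S (k ^ m) c}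

variable {K : ℤ} {G : AddMonoid.End ℤ}

lemma pow_apply_of_forall_apply_eq_mul (hG : ∀ x, G x = K * x) (n : ℕ) (x : ℤ) :
    (G ^ n) x = K ^ n * x := by
  induction n generalizing x with
  | zero => simp
  | succ n ih =>
    change (G ^ n) (G x) = _
    rw [hG, ih, pow_succ, mul_assoc]

lemma wordResidual_eq_kernelSet (hG : ∀ x, G x = K * x) (S : Set ℤ) (w : List ℤ) :
    wordResidual G S w = kernelSet S (K ^ w.length) (wordVal G w) := by
  ext x
  simp [wordResidual, kernelSet, pow_apply_of_forall_apply_eq_mul hG]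

lemma wordResidual_singleton (hG : ∀ x, G x = K * x) (S : Set ℤ) (t : ℤ) :
    wordResidual G S [t] = kernelSet S K t := by
  simp [wordResidual_eq_kernelSet hG]

lemma exists_wordVal_eq_of_abs_lt (hK : 2 ≤ K) (hG : ∀ x, G x = K * x) (x : ℤ) :
    ∃ w : List ℤ, (∀ t ∈ w, |t| < K) ∧ wordVal G w = x := by
  have hnat : ∀ n : ℕ, ∃ w : List ℤ, (∀ t ∈ w, |t| < K) ∧ wordVal G w = n := by
    obtain ⟨b, rfl⟩ := Int.eq_ofNat_of_zero_le (by omega : 0 ≤ K)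
    have hval : ∀ L : List ℕ, wordVal G (L.map (↑)) = ((Nat.ofDigits b L : ℕ) : ℤ) := by
      intro L
      induction L with
      | nil => simp
      | cons d L ih =>
        rw [List.map_cons, wordVal_cons, hG, ih, Nat.ofDigits_cons]
        push_cast
        ring
    intro n
    refine ⟨(Nat.digits b n).map (↑), ?_, by rw [hval, Nat.ofDigits_digits]⟩
    simp only [List.mem_map]
    rintro _ ⟨d, hd, rfl⟩
    simpa using Nat.digits_lt_base (by omega) hd
  rcases Int.natAbs_eq x with hx | hx
  · rw [hx]
    exact hnat x.natAbs
  · obtain ⟨w, hw, hval⟩ := hnat x.natAbs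
    refine ⟨w.map Neg.neg, ?_, by rw [wordVal_map_neg, hval, ← hx]⟩
    simp only [List.mem_map]
    rintro _ ⟨t, ht, rfl⟩
    simpa using hw t ht

/-- The constant `5` makes room for the carry of a sum of five digits. -/
lemma isSpanningSet_Icc (hK : 5 ≤ K) (hG : ∀ x, G x = K * x) :
    IsSpanningSet G (Set.Icc (-K) K) := by
  simp only [IsSpanningSet, Set.mem_Icc, hG]
  refine ⟨Set.finite_Icc _ _, by omega, fun x hx => by omega, fun x hx => ⟨?_, ?_⟩,
    fun x => ?_, fun x₁ h₁ x₂ h₂ x₃ h₃ x₄ h₄ x₅ h₅ => ?_, fun x₁ h₁ x₂ h₂ x₃ h₃ => ?_⟩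
  · nlinarith
  · nlinarith
  · obtain ⟨w, hw, hval⟩ := exists_wordVal_eq_of_abs_lt (by omega) hG x
    exact ⟨w, fun t ht => abs_le.1 (hw t ht).le, hval⟩
  · set s := x₁ + x₂ + x₃ + x₄ + x₅
    have hdiv := Int.emod_add_mul_ediv s K
    have hmod₀ := Int.emod_nonneg s (by omega : K ≠ 0)
    have hmod₁ := Int.emod_lt_of_pos s (by omega : 0 < K)
    refine ⟨s % K, ⟨by omega, by omega⟩, s / K, ⟨?_, ?_⟩, hdiv.symm⟩ <;> nlinarith
  · rintro ⟨y, hy⟩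
    exact ⟨y, ⟨by nlinarith, by nlinarith⟩, hy⟩

lemma abs_wordVal_le (hK : 1 ≤ K) (hG : ∀ x, G x = K * x) {B : ℤ} (w : List ℤ)
    (hw : ∀ t ∈ w, |t| ≤ B) : (K - 1) * |wordVal G w| ≤ B * (K ^ w.length - 1) := by
  induction w with
  | nil => simp
  | cons t w ih =>
    have ht : |t| ≤ B := hw t List.mem_cons_self
    have hrest := ih fun u hu => hw u (List.mem_cons_of_mem t hu)
    have htri : |t + K * wordVal G w| ≤ |t| + K * |wordVal G w| := by
      simpa [abs_mul, abs_of_nonneg (by omega : (0 : ℤ) ≤ K)] using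
        abs_add_le t (K * wordVal G w)
    rw [wordVal_cons, hG, List.length_cons, pow_succ]
    nlinarith

lemma kernelSet_mem_image_kKernel {k : ℤ} (hk : 0 < k) (S : Set ℤ) (m : ℕ) {c : ℤ}
    (hc : |c| ≤ 2 * k ^ m) :
    kernelSet S (k ^ m) c ∈
      (fun p : Set ℤ × ℤ => kernelSet p.1 1 p.2) '' (kKernel k S ×ˢ Set.Icc (-3) 2) := by
  have hn : 0 < k ^ m := pow_pos hk m
  have hdiv := Int.emod_add_mul_ediv c (k ^ m)
  have hmod₀ := Int.emod_nonneg c hn.ne'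
  have hmod₁ := Int.emod_lt_of_pos c hn
  obtain ⟨hc₀, hc₁⟩ := abs_le.1 hc
  refine ⟨(kernelSet S (k ^ m) (c % k ^ m), c / k ^ m),
    ⟨⟨m, c % k ^ m, hmod₀, hmod₁, rfl⟩, ⟨by nlinarith, by nlinarith⟩⟩, ?_⟩
  simp only [kernelSet_kernelSet, mul_one, hdiv]

lemma isSFAutomatic_Icc_of_finite_kKernel {k : ℤ} (hk : 2 ≤ k) {r : ℕ} (hr : 0 < r)
    (hG : ∀ x, G x = k ^ r * x) (S : Set ℤ) (hS : (kKernel k S).Finite) :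
    IsSFAutomatic G (Set.Icc (-(k ^ r)) (k ^ r)) S := by
  have hK : 2 ≤ k ^ r := hk.trans (le_self_pow₀ (by omega) hr.ne')
  have hspan (x : ℤ) : ∃ u : List (Set.Icc (-(k ^ r)) (k ^ r)),
      wordVal G (u.map Subtype.val) = x := by
    obtain ⟨w, hw, rfl⟩ := exists_wordVal_eq_of_abs_lt hK hG x
    lift w to List (Set.Icc (-(k ^ r)) (k ^ r)) using fun t ht => abs_le.1 (hw t ht).le
    exact ⟨w, rfl⟩
  rw [isSFAutomatic_iff_finite_range_wordResidual hspan]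
  refine ((hS.prod (Set.finite_Icc (-3 : ℤ) 2)).image fun p => kernelSet p.1 1 p.2).subset ?_
  rintro _ ⟨u, rfl⟩
  simp only [wordResidual_eq_kernelSet hG, ← pow_mul]
  apply kernelSet_mem_image_kKernel (by omega)
  have hbound := abs_wordVal_le (by omega) hG (u.map Subtype.val)
    fun t ht => abs_le.2 (by obtain ⟨v, -, rfl⟩ := List.mem_map.1 ht; exact v.2)
  rw [pow_mul]
  nlinarith [pow_pos (by omega : 0 < k ^ r) (u.map Subtype.val).length]

end Integers

section Carries

variable {k B : ℤ} {r : ℕ} {Sig : Set ℤ} {𝒯 : Set (Set ℤ)}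

def carryFamily (𝒯 : Set (Set ℤ)) (k B : ℤ) (r : ℕ) : Set (Set ℤ) :=
  {U | ∃ T ∈ 𝒯, ∃ s < r, ∃ y : ℤ, |y| ≤ B + k ^ s ∧ U = kernelSet T (k ^ s) y}

lemma carryFamily_finite (hk : 1 ≤ k) (h𝒯 : 𝒯.Finite) : (carryFamily 𝒯 k B r).Finite := by
  have hindex := h𝒯.prod ((Set.finite_Iio r).prod (Set.finite_Icc (-(B + k ^ r)) (B + k ^ r)))
  refine (hindex.image fun p => kernelSet p.1 (k ^ p.2.1) p.2.2).subset ?_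
  rintro _ ⟨T, hT, s, hs, y, hy, rfl⟩
  have hks : k ^ s ≤ k ^ r := pow_le_pow_right₀ hk hs.le
  exact ⟨(T, s, y), ⟨hT, hs, abs_le.1 (hy.trans (by omega))⟩, rfl⟩

variable (hk : 2 ≤ k) (hB₀ : 0 ≤ B) (hB : ∀ t ∈ Sig, |t| ≤ B)
  (hdigit : ∀ c, ∃ t ∈ Sig, ∃ c', c = t + k ^ r * c')
  (hclosed : ∀ T ∈ 𝒯, ∀ t ∈ Sig, kernelSet T (k ^ r) t ∈ 𝒯)
include hk hB₀ hB hdigit hclosed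

/-- Reading one more base-`k` digit either grows the carry or, after `r` digits, trades it for a
digit of `Sig` and a carry of size at most `B + 1`. -/
lemma kernelSet_mem_carryFamily {U : Set ℤ} (hU : U ∈ carryFamily 𝒯 k B r) {d : ℤ}
    (hd₀ : 0 ≤ d) (hd : d < k) : kernelSet U k d ∈ carryFamily 𝒯 k B r := by
  obtain ⟨T, hT, s, hs, y, hy, rfl⟩ := hU
  have hks : 0 < k ^ s := pow_pos (by omega) s
  have hkd : k ^ s * d ≤ k ^ s * (k - 1) := mul_le_mul_of_nonneg_left (by omega) hks.le
  have hstep :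
      kernelSet (kernelSet T (k ^ s) y) k d = kernelSet T (k ^ (s + 1)) (y + k ^ s * d) := by
    rw [kernelSet_kernelSet, pow_succ]
  have hcarry : |y + k ^ s * d| ≤ B + k ^ (s + 1) := by
    rw [abs_le] at hy ⊢
    constructor <;> nlinarith [pow_succ k s]
  rw [hstep]
  rcases Nat.lt_or_ge (s + 1) r with hs' | hs'
  · exact ⟨T, hT, s + 1, hs', _, hcarry, rfl⟩
  obtain rfl : s + 1 = r := by omega
  obtain ⟨t, ht, y', hy'⟩ := hdigit (y + k ^ s * d)
  refine ⟨kernelSet T (k ^ (s + 1)) t, hclosed T hT t ht, 0, by omega, y', ?_, ?_⟩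
  · have hK : k ≤ k ^ (s + 1) := le_self_pow₀ (by omega) (by omega)
    have ht' := abs_le.1 (hB t ht)
    rw [abs_le] at hcarry ⊢
    constructor <;> nlinarith
  · rw [hy', pow_zero, kernelSet_kernelSet, mul_one]

lemma kKernel_subset_carryFamily (hr : 0 < r) {S : Set ℤ} (hS : S ∈ 𝒯) :
    kKernel k S ⊆ carryFamily 𝒯 k B r := by
  rintro _ ⟨m, c, hc₀, hc, rfl⟩
  induction m generalizing c with
  | zero =>
    obtain rfl : c = 0 := by rw [pow_zero] at hc; omega
    exact ⟨S, hS, 0, hr, 0, by rw [abs_zero, pow_zero]; omega, rfl⟩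
  | succ m ih =>
    have hkm : 0 < k ^ m := pow_pos (by omega) m
    have hdiv := Int.emod_add_mul_ediv c (k ^ m)
    have hhigh : c / k ^ m < k := Int.ediv_lt_of_lt_mul hkm (by rwa [← pow_succ'])
    have hsplit : kernelSet S (k ^ (m + 1)) c =
        kernelSet (kernelSet S (k ^ m) (c % k ^ m)) k (c / k ^ m) := by
      rw [kernelSet_kernelSet, hdiv, pow_succ]
    rw [hsplit]
    exact kernelSet_mem_carryFamily hk hB₀ hB hdigit hclosed
      (ih _ (Int.emod_nonneg c hkm.ne') (Int.emod_lt_of_pos c hkm))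
      (Int.ediv_nonneg hc₀ hkm.le) hhigh

end Carries

lemma finite_kKernel_of_isSFAutomatic {k : ℤ} (hk : 2 ≤ k) {F : AddMonoid.End ℤ}
    (hF : ∀ x, F x = k * x) {r : ℕ} (hr : 0 < r) {Sig : Set ℤ}
    (hspan : IsSpanningSet (F ^ r) Sig) {S : Set ℤ} (hS : IsSFAutomatic (F ^ r) Sig S) :
    (kKernel k S).Finite := by
  have hG := pow_apply_of_forall_apply_eq_mul hF r
  obtain ⟨B, hB⟩ := (hspan.1.image (|·|)).bddAbove
  set 𝒯 := Set.range fun w : List Sig => wordResidual (F ^ r) S (w.map Subtype.val)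
  have h𝒯 : 𝒯.Finite :=
    (isSFAutomatic_iff_finite_range_wordResidual hspan.exists_wordVal_eq S).1 hS
  have hdigit (c : ℤ) : ∃ t ∈ Sig, ∃ c', c = t + k ^ r * c' := by
    simpa only [hG] using hspan.exists_eq_add_apply c
  have hclosed : ∀ T ∈ 𝒯, ∀ t ∈ Sig, kernelSet T (k ^ r) t ∈ 𝒯 := by
    rintro _ ⟨w, rfl⟩ t ht
    refine ⟨w ++ [⟨t, ht⟩], ?_⟩
    change wordResidual (F ^ r) S ((w ++ [(⟨t, ht⟩ : Sig)]).map Subtype.val) = _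
    rw [List.map_append, wordResidual_append, List.map_singleton, wordResidual_singleton hG]
  have hB' (t : ℤ) (ht : t ∈ Sig) : |t| ≤ max B 0 :=
    (hB (Set.mem_image_of_mem _ ht)).trans (le_max_left B 0)
  exact (carryFamily_finite (by omega) h𝒯).subset
    (kKernel_subset_carryFamily hk (le_max_right B 0) hB' hdigit hclosed hr ⟨[], by simp⟩)

/-- For `F : ℤ → ℤ` multiplication by `k ≥ 2`, a set `S ⊆ ℤ` is
`F`-automatic (i.e. `(Σ,F^r)`-automatic for some `r > 0` and `F^r`-spanning set `Σ`)
if and only if `S` is `k`-automatic in the classical sense: the collection of kernel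
sets `{x : c + k^m x ∈ S}`, for `m ∈ ℕ` and `0 ≤ c < k^m`, is finite. -/
theorem fAutomatic_iff_classical_k_automatic (k : ℤ) (hk : 2 ≤ k)
    (F : AddMonoid.End ℤ) (hF : ∀ x : ℤ, F x = k * x) (S : Set ℤ) :
    (∃ r : ℕ, 0 < r ∧ ∃ Sig : Set ℤ, IsSpanningSet (F ^ r) Sig ∧
        IsSFAutomatic (F ^ r) Sig S) ↔
      {T : Set ℤ | ∃ (m : ℕ) (c : ℤ), 0 ≤ c ∧ c < k ^ m ∧
        T = {x : ℤ | c + k ^ m * x ∈ S}}.Finite := by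
  change _ ↔ (kKernel k S).Finite
  constructor
  · rintro ⟨r, hr, Sig, hspan, hS⟩
    exact finite_kKernel_of_isSFAutomatic hk hF hr hspan hS
  · intro hS
    have hG := pow_apply_of_forall_apply_eq_mul hF 3
    have hk3 : 5 ≤ k ^ 3 := by nlinarith [pow_le_pow_left₀ (by norm_num) hk 3]
    exact ⟨3, by norm_num, _, isSpanningSet_Icc hk3 hG,
      isSFAutomatic_Icc_of_finite_kKernel hk (by norm_num) hG S hS⟩
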